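/- Let K be a field, P_0 = K[x_1,…,x_m], P = K[x_1,…,x_m,y_1,…,y_n] bigraded with deg x_i = (1,0) and deg y_j = (0,1), P_+ = (y_1,…,y_n), f ∈ P a bihomogeneous polynomial, and R = P/fP the hypersurface ring. Then for all j ≤ −n one has Hilb(H^n_{P_+}(R)_{j-1}) ≥ Hilb(H^n_{P_+}(R)_j), i.e., dim_K (H^n_{P_+}(R)_{j-1})_i ≥ dim_K (H^n_{P_+}(R)_j)_i for every i; the Hilbert function of the graded components of the top local cohomology is nonincreasing in j. -/

import Mathlib

/-!
Formalization of a statement from "On the regularity of local cohomology of bigraded algebras"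
(A. Rahimi). Here `P₀ = K[x₁,…,x_m]`, `P = P₀[y₁,…,yₙ]` is bigraded with `deg xᵢ = (1,0)`,
`deg yⱼ = (0,1)`, and `P₊ = (y₁,…,yₙ)`.  The top local cohomology `H^n_{P₊}(P)` is the free
`P₀`-module `⊕_c P₀ z^c` (`c : Fin n →₀ ℕ`, `z^c` of bidegree `(0, -n - |c|)`), on which a
bihomogeneous `f = Σ_β f_β y^β ∈ P` acts by the contraction `f ⬝ z^c = Σ_{β ≤ c} f_β z^{c-β}`.
For a hypersurface ring `R = P/fP` this yields the exact presentation
`⊕_{|c| = -n-j+b} P₀(-a) z^c → ⊕_{|c| = -n-j} P₀ z^c → H^n_{P₊}(R)_j → 0`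
(with `(a,b) = bideg f`), and `H^{n-1}_{P₊}(R)_j` is the kernel of the first map.
-/

open MvPolynomial

namespace Paper

/-- Total degree of an exponent vector. -/
def tdeg {n : ℕ} (c : Fin n →₀ ℕ) : ℕ := c.sum fun _ e => e

variable (A : Type) [CommRing A] (n : ℕ)

/-- The underlying module of the top local cohomology `H^n_{P₊}(P)` of `P = A[y₁,…,yₙ]`:
the free `A`-module with basis `z^c`, `c : Fin n →₀ ℕ` (`z^c` lies in `y`-degree `-n - |c|`). -/
abbrev Wmod := (Fin n →₀ ℕ) →₀ A

/-- The free `A`-submodule of `Wmod` spanned by the `z^c` with `|c| = k`;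
this is the graded component `H^n_{P₊}(P)_j` for `j = -n-k`. -/
noncomputable def Fk (k : ℕ) : Submodule A (Wmod A n) :=
  Finsupp.supported A A {c | tdeg c = k}

open scoped Classical in
/-- The contraction action of `f ∈ P = A[y₁,…,yₙ]` on `H^n_{P₊}(P)`:
`f ⬝ z^c = Σ_{β ≤ c} f_β z^{c-β}`, where `f = Σ_β f_β y^β` with `f_β ∈ A`. -/
noncomputable def contract (f : MvPolynomial (Fin n) A) :
    Wmod A n →ₗ[A] Wmod A n :=
  Finsupp.lsum A fun c =>
    (LinearMap.id : A →ₗ[A] A).smulRight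
      (f.support.sum fun β => if β ≤ c then Finsupp.single (c - β) (MvPolynomial.coeff β f) else 0)

variable (K : Type) [Field K] (m : ℕ)

/-- `f ∈ P = K[x₁,…,x_m][y₁,…,yₙ]` is bihomogeneous of bidegree `(a,b)`:
every monomial `x^ν y^β` occurring in `f` has `|ν| = a` and `|β| = b`. -/
def IsBihom (f : MvPolynomial (Fin n) (MvPolynomial (Fin m) K)) (a b : ℕ) : Prop :=
  ∀ β ν, MvPolynomial.coeff ν (MvPolynomial.coeff β f) ≠ 0 → tdeg ν = a ∧ tdeg β = b

/-- The `x`-degree-`i` strand of `Wmod` (coefficients homogeneous of degree `i`). -/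
def strandW (i : ℤ) : Submodule K (Wmod (MvPolynomial (Fin m) K) n) where
  carrier := {w | ∀ c ν, MvPolynomial.coeff ν (w c) ≠ 0 → (tdeg ν : ℤ) = i}
  add_mem' := by
    intro a b ha hb c ν h
    rw [Finsupp.add_apply, MvPolynomial.coeff_add] at h
    by_cases h1 : MvPolynomial.coeff ν (a c) ≠ 0
    · exact ha c ν h1
    · push_neg at h1
      exact hb c ν (by simpa [h1] using h)
  zero_mem' := by intro c ν h; simp at h
  smul_mem' := by
    intro k w hw c ν h
    rw [Finsupp.smul_apply, MvPolynomial.coeff_smul] at h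
    exact hw c ν (right_ne_zero_of_smul h)

/-- The submodule `U_j ⊆ F_j = ⊕_{|c| = t} P₀ z^c` (`j = -n-t`): the image of
`⊕_{|c| = t+b} P₀(-a) z^c` under multiplication by `f` on `H^n_{P₊}(P)`. -/
noncomputable def Uf (f : MvPolynomial (Fin n) (MvPolynomial (Fin m) K)) (t b : ℕ) :
    Submodule (MvPolynomial (Fin m) K) (Wmod (MvPolynomial (Fin m) K) n) :=
  Submodule.map (contract (MvPolynomial (Fin m) K) n f) (Fk (MvPolynomial (Fin m) K) n (t + b))

/-- The graded component `H^n_{P₊}(P/fP)_j`, `j = -n-t`, realized as the image of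
`F_j = ⊕_{|c| = t} P₀ z^c` in `Wmod/U_j`; i.e. the cokernel `F_j/U_j` of the presentation. -/
noncomputable def topH (f : MvPolynomial (Fin n) (MvPolynomial (Fin m) K)) (t b : ℕ) :
    Submodule (MvPolynomial (Fin m) K)
      ((Wmod (MvPolynomial (Fin m) K) n) ⧸ Uf n K m f t b) :=
  Submodule.map (Uf n K m f t b).mkQ (Fk (MvPolynomial (Fin m) K) n t)

/-- The `x`-degree-`i` component of `H^n_{P₊}(P/fP)_j`, `j = -n-t`, inside `Wmod/U_j`. -/
noncomputable def topHcomp (f : MvPolynomial (Fin n) (MvPolynomial (Fin m) K)) (t b : ℕ)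
    (i : ℤ) : Submodule K ((Wmod (MvPolynomial (Fin m) K) n) ⧸ Uf n K m f t b) :=
  Submodule.map ((Uf n K m f t b).mkQ.restrictScalars K)
    (strandW n K m i ⊓ (Fk (MvPolynomial (Fin m) K) n t).restrictScalars K)

/-- The grading (by `x`-degree) of `H^n_{P₊}(P/fP)_j`, `j = -n-t`. -/
noncomputable def topHgr (f : MvPolynomial (Fin n) (MvPolynomial (Fin m) K)) (t b : ℕ)
    (i : ℤ) : Submodule K ↥(topH n K m f t b) :=
  Submodule.comap ((topH n K m f t b).subtype.restrictScalars K) (topHcomp n K m f t b i)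

/-- `H^{n-1}_{P₊}(P/fP)_j`, `j = -n-t`: the kernel of multiplication by `f` from
`⊕_{|c| = t+b} P₀(-a) z^c` to `⊕_{|c| = t} P₀ z^c`. -/
noncomputable def syzM (f : MvPolynomial (Fin n) (MvPolynomial (Fin m) K)) (t b : ℕ) :
    Submodule (MvPolynomial (Fin m) K) (Wmod (MvPolynomial (Fin m) K) n) :=
  LinearMap.ker (contract (MvPolynomial (Fin m) K) n f) ⊓ Fk (MvPolynomial (Fin m) K) n (t + b)

/-- The grading of `H^{n-1}_{P₊}(P/fP)_j`, `j = -n-t`: since it lives inside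
`⊕_{|c| = t+b} P₀(-a) z^c`, its degree-`i` component consists of the elements whose
coefficients are homogeneous of degree `i - a`. -/
noncomputable def syzGr (f : MvPolynomial (Fin n) (MvPolynomial (Fin m) K)) (t b a : ℕ)
    (i : ℤ) : Submodule K ↥(syzM n K m f t b) :=
  Submodule.comap ((syzM n K m f t b).subtype.restrictScalars K) (strandW n K m (i - a))

/-!
Multiplication by `y₁` on `H^n_{P₊}(P) = ⊕_c P₀ z^c` sends `z^c` to `z^{c-e₁}`. It commutes with
the action of `f`, so it maps `U_{j-1}` into `U_j`, and it maps `F_{j-1}` onto `F_j` (a section is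
`z^c ↦ z^{c+e₁}`) preserving `x`-degrees. Hence it induces a surjection
`H^n_{P₊}(R)_{j-1} → H^n_{P₊}(R)_j` on each (finite-dimensional) `x`-degree strand.
-/

lemma tdeg_eq_degree {n : ℕ} (c : Fin n →₀ ℕ) : tdeg c = c.degree := rfl

section Contraction

variable {A : Type} [CommRing A] {n : ℕ}

lemma contract_apply (f : MvPolynomial (Fin n) A) (w : Wmod A n) (d : Fin n →₀ ℕ) :
    contract A n f w d = ∑ β ∈ f.support, w (d + β) * coeff β f := by
  classical
  induction w using Finsupp.induction_linear with
  | zero => simp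
  | add v w hv hw => simp [hv, hw, add_mul, Finset.sum_add_distrib]
  | single c p =>
    simp only [contract, Finsupp.lsum_single, LinearMap.smulRight_apply, LinearMap.id_apply,
      Finsupp.smul_apply, Finsupp.finsetSum_apply, Finset.mul_sum, smul_eq_mul]
    refine Finset.sum_congr rfl fun β _ => ?_
    by_cases h : c = d + β
    · subst h; simp
    · have h' : ¬(β ≤ c ∧ c - β = d) := fun ⟨hβ, hd⟩ =>
        h (by rw [← hd, tsub_add_cancel_of_le hβ])
      split_ifs <;> simp_all

/-- Multiplication by `y^e` on `H^n_{P₊}(P)`: `z^c ↦ z^{c-e}`, which is `0` unless `e ≤ c`. -/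
noncomputable def yMul (e : Fin n →₀ ℕ) : Wmod A n →ₗ[A] Wmod A n :=
  Finsupp.lcomapDomain (· + e) (add_left_injective e)

noncomputable def yMulSection (e : Fin n →₀ ℕ) : Wmod A n →ₗ[A] Wmod A n :=
  Finsupp.lmapDomain A A (· + e)

@[simp]
lemma yMul_apply (e : Fin n →₀ ℕ) (w : Wmod A n) (c : Fin n →₀ ℕ) :
    yMul e w c = w (c + e) := rfl

lemma yMul_yMulSection (e : Fin n →₀ ℕ) (w : Wmod A n) : yMul e (yMulSection e w) = w :=
  Finsupp.comapDomain_mapDomain _ (add_left_injective e) w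

lemma yMul_contract (e : Fin n →₀ ℕ) (f : MvPolynomial (Fin n) A) (w : Wmod A n) :
    yMul e (contract A n f w) = contract A n f (yMul e w) := by
  ext d
  simp only [yMul_apply, contract_apply, add_right_comm]

lemma yMul_mem_Fk (e : Fin n →₀ ℕ) {k : ℕ} {w : Wmod A n} (hw : w ∈ Fk A n (k + tdeg e)) :
    yMul e w ∈ Fk A n k := by
  rw [Fk, Finsupp.mem_supported'] at hw ⊢
  intro c hc
  exact hw (c + e) fun h => hc (by simpa [tdeg_eq_degree] using h)

lemma yMulSection_mem_Fk (e : Fin n →₀ ℕ) {k : ℕ} {w : Wmod A n} (hw : w ∈ Fk A n k) :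
    yMulSection e w ∈ Fk A n (k + tdeg e) := by
  have himage : (· + e) '' {c | tdeg c = k} ⊆ {c | tdeg c = k + tdeg e} := by
    rintro _ ⟨c, hc, rfl⟩
    simp_all [tdeg_eq_degree]
  refine Finsupp.supported_mono himage ?_
  rw [← Finsupp.lmapDomain_supported]
  exact Submodule.mem_map_of_mem hw

end Contraction

section Strands

variable {K : Type} [Field K] {m n : ℕ}

lemma yMulSection_mem_strandW (e : Fin n →₀ ℕ) {i : ℤ} {w : Wmod (MvPolynomial (Fin m) K) n}
    (hw : w ∈ strandW n K m i) : yMulSection e w ∈ strandW n K m i := by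
  intro a ν hν
  by_cases ha : a ∈ Set.range (· + e)
  · obtain ⟨c, rfl⟩ := ha
    rw [yMulSection, Finsupp.lmapDomain_apply, Finsupp.mapDomain_apply (add_left_injective e)] at hν
    exact hw c ν hν
  · rw [yMulSection, Finsupp.lmapDomain_apply, Finsupp.mapDomain_of_notMem_range _ _ ha] at hν
    simp at hν

lemma Uf_le_comap_yMul (e : Fin n →₀ ℕ) (f : MvPolynomial (Fin n) (MvPolynomial (Fin m) K))
    (t b : ℕ) : Uf n K m f (t + tdeg e) b ≤ (Uf n K m f t b).comap (yMul e) := by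
  rintro _ ⟨u, hu, rfl⟩
  refine ⟨yMul e u, yMul_mem_Fk e ?_, (yMul_contract e f u).symm⟩
  rwa [add_right_comm]

lemma finiteDimensional_strandW_inf_Fk (i : ℤ) (k : ℕ) :
    FiniteDimensional K
      ↥(strandW n K m i ⊓ (Fk (MvPolynomial (Fin m) K) n k).restrictScalars K) := by
  classical
  let b := Finsupp.basis fun _ : Fin n →₀ ℕ => MvPolynomial.basisMonomials (Fin m) K
  let S := (fun p : (Fin n →₀ ℕ) × (Fin m →₀ ℕ) => b ⟨p.1, p.2⟩) ''
    ({c | c.degree = k} ×ˢ {ν | ν.degree = i.toNat})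
  have hS : S.Finite :=
    ((Finsupp.finite_of_degree_eq k).prod (Finsupp.finite_of_degree_eq i.toNat)).image _
  have : FiniteDimensional K (Submodule.span K S) := FiniteDimensional.span_of_finite K hS
  refine Submodule.finiteDimensional_of_le (S₂ := Submodule.span K S) ?_
  rintro w ⟨hstrand, hsupp⟩
  refine Submodule.span_mono ?_ (b.mem_span_repr_support w)
  rintro _ ⟨⟨c, ν⟩, hcν, rfl⟩
  refine ⟨(c, ν), ?_, rfl⟩
  have hcoeff : coeff ν (w c) ≠ 0 := (Finsupp.mem_support_iff.mp hcν : b.repr w ⟨c, ν⟩ ≠ 0)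
  have hν := hstrand c ν hcoeff
  have hc : c ∈ {c | tdeg c = k} :=
    hsupp (Finsupp.mem_support_iff.mpr fun h => by simp [h] at hcoeff)
  exact ⟨hc, by simp only [Set.mem_ofPred_eq, ← tdeg_eq_degree]; omega⟩

end Strands

section TopCohomology

variable {K : Type} [Field K] {m n : ℕ} (f : MvPolynomial (Fin n) (MvPolynomial (Fin m) K))
  (b : ℕ)

noncomputable def topYMul (e : Fin n →₀ ℕ) (t : ℕ) :
    (Wmod (MvPolynomial (Fin m) K) n ⧸ Uf n K m f (t + tdeg e) b) →ₗ[MvPolynomial (Fin m) K]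
      (Wmod (MvPolynomial (Fin m) K) n ⧸ Uf n K m f t b) :=
  Submodule.mapQ _ _ (yMul e) (Uf_le_comap_yMul e f t b)

lemma topHcomp_le_map_topYMul (e : Fin n →₀ ℕ) (t : ℕ) (i : ℤ) :
    topHcomp n K m f t b i ≤
      (topHcomp n K m f (t + tdeg e) b i).map ((topYMul f b e t).restrictScalars K) := by
  rintro _ ⟨w, ⟨hstrand, hsupp⟩, rfl⟩
  refine ⟨Submodule.mkQ _ (yMulSection e w),
    ⟨yMulSection e w, ⟨yMulSection_mem_strandW e hstrand, yMulSection_mem_Fk e hsupp⟩, rfl⟩, ?_⟩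
  simp [topYMul, yMul_yMulSection]

instance finiteDimensional_topHcomp (t : ℕ) (i : ℤ) :
    FiniteDimensional K (topHcomp n K m f t b i) :=
  have := finiteDimensional_strandW_inf_Fk (K := K) (m := m) (n := n) i t
  Module.Finite.map _ _

lemma finrank_topHcomp_le_add_tdeg (e : Fin n →₀ ℕ) (t : ℕ) (i : ℤ) :
    Module.finrank K (topHcomp n K m f t b i) ≤
      Module.finrank K (topHcomp n K m f (t + tdeg e) b i) :=
  (Submodule.finrank_mono (topHcomp_le_map_topYMul f b e t i)).trans
    (Submodule.finrank_map_le _ _)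

end TopCohomology

theorem hilbert_function_of_top_local_cohomology_of_hypersurface_nonincreasing_general
    (K : Type) [Field K] (m n : ℕ) (hn : 0 < n)
    (f : MvPolynomial (Fin n) (MvPolynomial (Fin m) K)) (b : ℕ)
    (t : ℕ) (i : ℤ) :
    Module.finrank K ↥(topHcomp n K m f t b i) ≤
      Module.finrank K ↥(topHcomp n K m f (t + 1) b i) := by
  have h := finrank_topHcomp_le_add_tdeg f b (Finsupp.single ⟨0, hn⟩ 1) t i
  rwa [tdeg_eq_degree, Finsupp.degree_single] at h

/-- **Theorem (paper, Theorem 3.5).** Let `R = P/fP` be a (bigraded) hypersurface ring,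
`f` bihomogeneous of bidegree `(a,b)`.  Then `Hilb(H^n_{P₊}(R)_{j-1}) ≥ Hilb(H^n_{P₊}(R)_j)`
for all `j ≤ -n`, i.e. (writing `j = -n-t`, `t ∈ ℕ`) for every `x`-degree `i` the dimension
`dim_K (H^n_{P₊}(R)_{-n-t})_i` is a nondecreasing function of `t`. -/
theorem hilbert_function_of_top_local_cohomology_of_hypersurface_nonincreasing
    (K : Type) [Field K] (m n : ℕ) (hn : 0 < n)
    (f : MvPolynomial (Fin n) (MvPolynomial (Fin m) K)) (a b : ℕ)
    (hf : IsBihom n K m f a b) (t : ℕ) (i : ℤ) :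
    Module.finrank K ↥(topHcomp n K m f t b i) ≤
      Module.finrank K ↥(topHcomp n K m f (t + 1) b i) :=
  hilbert_function_of_top_local_cohomology_of_hypersurface_nonincreasing_general K m n hn f b t i

end Paper
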